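/- arXiv:1310.4723 — 8 statements merged into one kernel-verified Lean document; each statement's English description precedes it below -/
import Mathlib

section
/- For y in the open simplex D̊ = {y ∈ (0,1)^N : ∑_k y_k = 1}, the kernel of B(y) is exactly span{y}. -/
/-!
Writing `(B x)_i = ∑_j f_ij (y_i x_j - y_j x_i)` shows `B y = 0`. Conversely, if `B x = 0`, pick
`i₀` maximising the ratio `x_i / y_i`: every summand of row `i₀` is then `≤ 0`, their sum vanishes,
so all of them vanish, and `f_{i₀ j} > 0` forces `x_j / y_j = x_{i₀} / y_{i₀}` for all `j`.
-/

open Matrix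

namespace MaxwellStefan

variable {ι : Type*} [Fintype ι] [DecidableEq ι] (f : ι → ι → ℝ) (y : ι → ℝ)

def matrix : Matrix ι ι ℝ :=
  of fun i j => if i = j then -(∑ l, f i l * y l) else f i j * y i

variable {f y}

theorem matrix_mulVec_apply (hdiag : ∀ i, f i i = 0) (x : ι → ℝ) (i : ι) :
    (matrix f y *ᵥ x) i = ∑ j, f i j * (y i * x j - y j * x i) := by
  have hrow : ∀ j, matrix f y i j * x j
      = f i j * y i * x j - if j = i then (∑ l, f i l * y l) * x i else 0 := by
    intro j
    rcases eq_or_ne j i with rfl | hji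
    · simp [matrix, hdiag]
    · simp [matrix, hji, hji.symm]
  simp only [mulVec, dotProduct, hrow, Finset.sum_sub_distrib, Finset.sum_ite_eq',
    Finset.mem_univ, if_true, mul_sub, Finset.sum_mul]
  congr 1 <;> exact Finset.sum_congr rfl fun _ _ => by ring

theorem matrix_mulVec_self (hdiag : ∀ i, f i i = 0) : matrix f y *ᵥ y = 0 := by
  ext i
  simp [matrix_mulVec_apply hdiag, mul_comm]

theorem eq_smul_of_matrix_mulVec_eq_zero (hpos : ∀ i j, i ≠ j → 0 < f i j)
    (hdiag : ∀ i, f i i = 0) (hy : ∀ k, 0 < y k) {x : ι → ℝ} (hx : matrix f y *ᵥ x = 0) :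
    ∃ c : ℝ, x = c • y := by
  cases isEmpty_or_nonempty ι
  · exact ⟨0, Subsingleton.elim _ _⟩
  obtain ⟨i₀, hmax⟩ := Finite.exists_max fun k => x k / y k
  refine ⟨x i₀ / y i₀, funext fun j => ?_⟩
  have hnonpos : ∀ j, f i₀ j * (y i₀ * x j - y j * x i₀) ≤ 0 := by
    intro j
    rcases eq_or_ne i₀ j with rfl | hne
    · simp
    · have := (div_le_div_iff₀ (hy j) (hy i₀)).mp (hmax j)
      exact mul_nonpos_of_nonneg_of_nonpos (hpos i₀ j hne).le (by linarith)
  have hrow : ∑ j, f i₀ j * (y i₀ * x j - y j * x i₀) = 0 := by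
    rw [← matrix_mulVec_apply hdiag, hx, Pi.zero_apply]
  have hterm := (Finset.sum_eq_zero_iff_of_nonpos fun j _ => hnonpos j).mp hrow j
    (Finset.mem_univ j)
  have hcross : y i₀ * x j = y j * x i₀ := by
    rcases eq_or_ne i₀ j with rfl | hne
    · rfl
    · exact sub_eq_zero.mp ((mul_eq_zero.mp hterm).resolve_left (hpos i₀ j hne).ne')
  have := (hy i₀).ne'
  simp only [Pi.smul_apply, smul_eq_mul]
  field_simp
  linarith

theorem matrix_mulVec_eq_zero_iff (hpos : ∀ i j, i ≠ j → 0 < f i j)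
    (hdiag : ∀ i, f i i = 0) (hy : ∀ k, 0 < y k) (x : ι → ℝ) :
    matrix f y *ᵥ x = 0 ↔ ∃ c : ℝ, x = c • y := by
  refine ⟨eq_smul_of_matrix_mulVec_eq_zero hpos hdiag hy, ?_⟩
  rintro ⟨c, rfl⟩
  rw [mulVec_smul, matrix_mulVec_self hdiag, smul_zero]

end MaxwellStefan

theorem maxwell_stefan_B_kernel_span_general
    (N : ℕ) (f : Fin N → Fin N → ℝ)
    (hpos : ∀ i j, i ≠ j → 0 < f i j)
    (hdiag : ∀ i, f i i = 0)
    (y : Fin N → ℝ)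
    (hy : ∀ k, 0 < y k ∧ y k < 1)
    (B : Matrix (Fin N) (Fin N) ℝ)
    (hB : ∀ i j, B i j = if i = j then -(∑ l, f i l * y l) else f i j * y i) :
    ∀ x : Fin N → ℝ, B.mulVec x = 0 ↔ ∃ c : ℝ, x = c • y := by
  obtain rfl : B = MaxwellStefan.matrix f y := Matrix.ext hB
  exact MaxwellStefan.matrix_mulVec_eq_zero_iff hpos hdiag fun k => (hy k).1

/-- For y in the open simplex, the kernel of B(y) is exactly span{y}. -/
theorem maxwell_stefan_B_kernel_span
    (N : ℕ) (hN : 2 ≤ N) (f : Fin N → Fin N → ℝ)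
    (hsym : ∀ i j, f i j = f j i)
    (hpos : ∀ i j, i ≠ j → 0 < f i j)
    (hdiag : ∀ i, f i i = 0)
    (y : Fin N → ℝ)
    (hy : ∀ k, 0 < y k ∧ y k < 1) (hsum : ∑ k, y k = 1)
    (B : Matrix (Fin N) (Fin N) ℝ)
    (hB : ∀ i j, B i j = if i = j then -(∑ l, f i l * y l) else f i j * y i) :
    ∀ x : Fin N → ℝ, B.mulVec x = 0 ↔ ∃ c : ℝ, x = c • y :=
  maxwell_stefan_B_kernel_span_general N f hpos hdiag y hy B hB
end

section
/- For y in the open simplex D̊, the restriction of B(y) to the subspace E = {x : ∑_k x_k = 0} is a bijective linear map from E to E. -/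
/-!
Since `fᵢᵢ = 0`, `(B x)ᵢ = ∑ⱼ fᵢⱼ (yᵢ xⱼ - yⱼ xᵢ)` is a sum of fluxes antisymmetric in `i, j`;
hence `∑ᵢ (B x)ᵢ = 0` and `B` maps into `E`. Testing `B x` against `x / y` gives the dissipation identity
`∑ᵢ (B x)ᵢ xᵢ / yᵢ = -½ ∑ᵢⱼ fᵢⱼ (yᵢ xⱼ - yⱼ xᵢ)² / (yᵢ yⱼ)`, so `B x = 0` forces `x ∥ y`, and then
`∑ x = 0` forces `x = 0`. An injective endomorphism of the finite-dimensional space `E` is onto.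
-/

open Matrix

variable {ι : Type*} [Fintype ι]

theorem Finset.sum_sum_eq_zero_of_antisymm {g : ι → ι → ℝ} (hg : ∀ i j, g i j = -g j i) :
    ∑ i, ∑ j, g i j = 0 := by
  have h : ∑ i, ∑ j, g i j = -∑ i, ∑ j, g i j := by
    conv_lhs => rw [Finset.sum_comm]
    rw [← Finset.sum_neg_distrib]
    exact Finset.sum_congr rfl fun i _ => by
      rw [← Finset.sum_neg_distrib]; exact Finset.sum_congr rfl fun j _ => hg j i
  linarith

section maxwellStefanMatrix

variable [DecidableEq ι]

def maxwellStefanMatrix (f : ι → ι → ℝ) (y : ι → ℝ) : Matrix ι ι ℝ :=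
  Matrix.of fun i j => if i = j then -(∑ l, f i l * y l) else f i j * y i

variable {f : ι → ι → ℝ} {y : ι → ℝ}

theorem maxwellStefanMatrix_mulVec_apply (hdiag : ∀ i, f i i = 0) (x : ι → ℝ) (i : ι) :
    (maxwellStefanMatrix f y *ᵥ x) i = ∑ j, f i j * (y i * x j - y j * x i) := by
  have hentry : ∀ j, maxwellStefanMatrix f y i j * x j =
      f i j * y i * x j - if i = j then (∑ l, f i l * y l) * x i else 0 := by
    intro j
    by_cases h : i = j
    · subst h; simp [maxwellStefanMatrix, hdiag]
    · simp [maxwellStefanMatrix, h]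
  simp only [mulVec, dotProduct, hentry, Finset.sum_sub_distrib, Finset.sum_ite_eq,
    Finset.mem_univ, if_true, Finset.sum_mul]
  rw [← Finset.sum_sub_distrib]
  exact Finset.sum_congr rfl fun j _ => by ring

theorem sum_maxwellStefanMatrix_mulVec (hsym : ∀ i j, f i j = f j i) (hdiag : ∀ i, f i i = 0)
    (x : ι → ℝ) : ∑ i, (maxwellStefanMatrix f y *ᵥ x) i = 0 := by
  simp only [maxwellStefanMatrix_mulVec_apply hdiag]
  exact Finset.sum_sum_eq_zero_of_antisymm fun i j => by rw [hsym i j]; ring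

theorem sum_maxwellStefanMatrix_mulVec_mul_div (hsym : ∀ i j, f i j = f j i)
    (hdiag : ∀ i, f i i = 0) (hy : ∀ i, y i ≠ 0) (x : ι → ℝ) :
    ∑ i, (maxwellStefanMatrix f y *ᵥ x) i * (x i / y i) =
      -(∑ i, ∑ j, f i j * (y i * x j - y j * x i) ^ 2 / (y i * y j)) / 2 := by
  have hswap : ∑ i, (maxwellStefanMatrix f y *ᵥ x) i * (x i / y i) =
      -∑ i, ∑ j, f i j * (y i * x j - y j * x i) * (x j / y j) := by
    simp only [maxwellStefanMatrix_mulVec_apply hdiag, Finset.sum_mul]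
    conv_lhs => rw [Finset.sum_comm]
    rw [← Finset.sum_neg_distrib]
    refine Finset.sum_congr rfl fun i _ => ?_
    rw [← Finset.sum_neg_distrib]
    exact Finset.sum_congr rfl fun j _ => by rw [hsym i j]; ring
  have hsquare : ∑ i, ∑ j, f i j * (y i * x j - y j * x i) ^ 2 / (y i * y j) =
      ∑ i, ∑ j, f i j * (y i * x j - y j * x i) * (x j / y j) -
        ∑ i, (maxwellStefanMatrix f y *ᵥ x) i * (x i / y i) := by
    simp only [maxwellStefanMatrix_mulVec_apply hdiag, Finset.sum_mul, ← Finset.sum_sub_distrib]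
    refine Finset.sum_congr rfl fun i _ => Finset.sum_congr rfl fun j _ => ?_
    field_simp [hy i, hy j]
  linarith

theorem maxwellStefanMatrix_mulVec_eq_zero (hsym : ∀ i j, f i j = f j i)
    (hpos : ∀ i j, i ≠ j → 0 < f i j) (hdiag : ∀ i, f i i = 0) (hy : ∀ i, 0 < y i)
    (hsum : ∑ i, y i ≠ 0) {x : ι → ℝ} (hx : ∑ i, x i = 0)
    (hBx : maxwellStefanMatrix f y *ᵥ x = 0) : x = 0 := by
  set q : ι → ι → ℝ := fun i j => f i j * (y i * x j - y j * x i) ^ 2 / (y i * y j)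
  have hq_nonneg : ∀ i j, 0 ≤ q i j := by
    intro i j
    have hf : 0 ≤ f i j := by
      rcases eq_or_ne i j with rfl | h
      · exact (hdiag i).ge
      · exact (hpos i j h).le
    have := mul_pos (hy i) (hy j)
    positivity
  have hq_sum : ∑ i, ∑ j, q i j = 0 := by
    have := sum_maxwellStefanMatrix_mulVec_mul_div hsym hdiag (fun i => (hy i).ne') x
    simp only [hBx, Pi.zero_apply, zero_mul, Finset.sum_const_zero] at this
    linarith
  have hprop : ∀ i j, y i * x j = y j * x i := by
    intro i j
    rcases eq_or_ne i j with rfl | hij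
    · ring
    have hqij : q i j = 0 := by
      rw [Finset.sum_eq_zero_iff_of_nonneg fun i _ => Finset.sum_nonneg fun j _ => hq_nonneg i j]
        at hq_sum
      exact (Finset.sum_eq_zero_iff_of_nonneg fun j _ => hq_nonneg i j).1
        (hq_sum i (Finset.mem_univ i)) j (Finset.mem_univ j)
    have hne : f i j ≠ 0 ∧ y i * y j ≠ 0 := ⟨(hpos i j hij).ne', (mul_pos (hy i) (hy j)).ne'⟩
    simp only [q, div_eq_zero_iff, mul_eq_zero, hne, false_or, or_false, pow_eq_zero_iff,
      ne_eq, OfNat.ofNat_ne_zero, not_false_eq_true] at hqij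
    linarith
  funext i
  have := Finset.sum_congr rfl fun j (_ : j ∈ Finset.univ) => hprop i j
  rw [← Finset.mul_sum, ← Finset.sum_mul, hx, mul_zero] at this
  exact (mul_eq_zero.1 this.symm).resolve_left hsum

end maxwellStefanMatrix

def sumZeroSubmodule (ι : Type*) [Fintype ι] : Submodule ℝ (ι → ℝ) :=
  LinearMap.ker (∑ i, LinearMap.proj i : (ι → ℝ) →ₗ[ℝ] ℝ)

theorem mem_sumZeroSubmodule {x : ι → ℝ} : x ∈ sumZeroSubmodule ι ↔ ∑ i, x i = 0 := by
  simp [sumZeroSubmodule]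

theorem maxwell_stefan_B_bijective_on_E_general
    (N : ℕ) (f : Fin N → Fin N → ℝ)
    (hsym : ∀ i j, f i j = f j i)
    (hpos : ∀ i j, i ≠ j → 0 < f i j)
    (hdiag : ∀ i, f i i = 0)
    (y : Fin N → ℝ)
    (hy : ∀ k, 0 < y k ∧ y k < 1) (hsum : ∑ k, y k = 1)
    (B : Matrix (Fin N) (Fin N) ℝ)
    (hB : ∀ i j, B i j = if i = j then -(∑ l, f i l * y l) else f i j * y i) :
    (∀ x : Fin N → ℝ, ∑ i, x i = 0 → B.mulVec x = 0 → x = 0) ∧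
    (∀ z : Fin N → ℝ, ∑ i, z i = 0 → ∃ x : Fin N → ℝ, ∑ i, x i = 0 ∧ B.mulVec x = z) := by
  obtain rfl : B = maxwellStefanMatrix f y := Matrix.ext hB
  have inj : ∀ x : Fin N → ℝ, ∑ i, x i = 0 → maxwellStefanMatrix f y *ᵥ x = 0 → x = 0 :=
    fun x hx => maxwellStefanMatrix_mulVec_eq_zero hsym hpos hdiag (fun k => (hy k).1)
      (hsum ▸ one_ne_zero) hx
  have hmaps : ∀ x ∈ sumZeroSubmodule (Fin N),
      (maxwellStefanMatrix f y).mulVecLin x ∈ sumZeroSubmodule (Fin N) :=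
    fun x _ => mem_sumZeroSubmodule.2 (sum_maxwellStefanMatrix_mulVec hsym hdiag x)
  have hinjOn : Set.InjOn (maxwellStefanMatrix f y).mulVecLin (sumZeroSubmodule (Fin N)) :=
    LinearMap.disjoint_ker_iff_injOn.1 <| LinearMap.disjoint_ker.2 fun x hx =>
      inj x (mem_sumZeroSubmodule.1 hx)
  refine ⟨inj, fun z hz => ?_⟩
  obtain ⟨x, hx, rfl⟩ := (LinearMap.injOn_iff_surjOn hmaps).1 hinjOn (mem_sumZeroSubmodule.2 hz)
  exact ⟨x, mem_sumZeroSubmodule.1 hx, rfl⟩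

/-- For y ∈ D̊, the restriction of B(y) to E = {x : ∑ x_k = 0}
is a bijective linear map from E onto E. -/
theorem maxwell_stefan_B_bijective_on_E
    (N : ℕ) (hN : 2 ≤ N) (f : Fin N → Fin N → ℝ)
    (hsym : ∀ i j, f i j = f j i)
    (hpos : ∀ i j, i ≠ j → 0 < f i j)
    (hdiag : ∀ i, f i i = 0)
    (y : Fin N → ℝ)
    (hy : ∀ k, 0 < y k ∧ y k < 1) (hsum : ∑ k, y k = 1)
    (B : Matrix (Fin N) (Fin N) ℝ)
    (hB : ∀ i j, B i j = if i = j then -(∑ l, f i l * y l) else f i j * y i) :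
    (∀ x : Fin N → ℝ, ∑ i, x i = 0 → B.mulVec x = 0 → x = 0) ∧
    (∀ z : Fin N → ℝ, ∑ i, z i = 0 → ∃ x : Fin N → ℝ, ∑ i, x i = 0 ∧ B.mulVec x = z) :=
  maxwell_stefan_B_bijective_on_E_general N f hsym hpos hdiag y hy hsum B hB
end

section
/- If y ∈ D with y_k = 0 for some index k, and x ∈ E satisfies B(y)x = 0, then x_k = 0. -/
/-! The `k`-th row of `B(y)` is `(f k j * y k)_{j ≠ k}` off the diagonal, which vanishes when
`y k = 0`, so `(B(y) x)_k = B(y)_{kk} x_k`. The diagonal entry `-∑ l, f k l * y l` is strictly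
negative: `y` has a positive entry, necessarily at some `l ≠ k`, where `f k l > 0`. -/

open Finset Matrix

theorem Matrix.mulVec_apply_eq_diag_mul {n α : Type*} [Fintype n] [NonUnitalNonAssocSemiring α]
    {B : Matrix n n α} {k : n} (hrow : ∀ j, j ≠ k → B k j = 0) (x : n → α) :
    (B *ᵥ x) k = B k k * x k := by
  rw [mulVec, dotProduct, sum_eq_single_of_mem k (mem_univ k)]
  intro j _ hj
  rw [hrow j hj, zero_mul]

theorem Finset.sum_mul_pos_of_support_pos {ι R : Type*} [Fintype ι] [Semiring R] [LinearOrder R]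
    [IsStrictOrderedRing R] {w y : ι → R}
    (hy : ∀ l, 0 ≤ y l) (hsum : 0 < ∑ l, y l) (hw : ∀ l, y l ≠ 0 → 0 < w l) :
    0 < ∑ l, w l * y l := by
  obtain ⟨l, -, hl⟩ : ∃ l ∈ univ, (0 : R) < y l :=
    exists_lt_of_sum_lt (by rwa [sum_const_zero])
  refine sum_pos' (fun i _ => ?_) ⟨l, mem_univ l, mul_pos (hw l hl.ne') hl⟩
  rcases eq_or_ne (y i) 0 with h | h
  · rw [h, mul_zero]
  · exact mul_nonneg (hw i h).le (hy i)

theorem maxwell_stefan_vanishing_component_general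
    (N : ℕ) (f : Fin N → Fin N → ℝ)
    (hpos : ∀ i j, i ≠ j → 0 < f i j)
    (y : Fin N → ℝ)
    (hy : ∀ k, 0 ≤ y k ∧ y k ≤ 1) (hsum : ∑ k, y k = 1)
    (B : Matrix (Fin N) (Fin N) ℝ)
    (hB : ∀ i j, B i j = if i = j then -(∑ l, f i l * y l) else f i j * y i)
    (k : Fin N) (hk : y k = 0)
    (x : Fin N → ℝ) (hBx : B.mulVec x = 0) :
    x k = 0 := by
  have hrow : (B *ᵥ x) k = B k k * x k :=
    mulVec_apply_eq_diag_mul (fun j hj => by rw [hB, if_neg hj.symm, hk, mul_zero]) x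
  have hBkk : B k k < 0 := by
    rw [hB, if_pos rfl, neg_lt_zero]
    refine sum_mul_pos_of_support_pos (fun l => (hy l).1) (by rw [hsum]; exact one_pos) ?_
    intro l hl
    exact hpos k l (fun h => hl (h ▸ hk))
  have hprod : B k k * x k = 0 := by rw [← hrow, hBx, Pi.zero_apply]
  exact (mul_eq_zero.mp hprod).resolve_left hBkk.ne

/-- If y ∈ D with y_k = 0 for some index k, and x ∈ E satisfies
B(y)x = 0, then x_k = 0. -/
theorem maxwell_stefan_vanishing_component
    (N : ℕ) (hN : 2 ≤ N) (f : Fin N → Fin N → ℝ)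
    (hsym : ∀ i j, f i j = f j i)
    (hpos : ∀ i j, i ≠ j → 0 < f i j)
    (hdiag : ∀ i, f i i = 0)
    (y : Fin N → ℝ)
    (hy : ∀ k, 0 ≤ y k ∧ y k ≤ 1) (hsum : ∑ k, y k = 1)
    (B : Matrix (Fin N) (Fin N) ℝ)
    (hB : ∀ i j, B i j = if i = j then -(∑ l, f i l * y l) else f i j * y i)
    (k : Fin N) (hk : y k = 0)
    (x : Fin N → ℝ) (hx : ∑ i, x i = 0) (hBx : B.mulVec x = 0) :
    x k = 0 :=
  maxwell_stefan_vanishing_component_general N f hpos y hy hsum B hB k hk x hBx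
end

section
/- For y ∈ D̊, the symmetric matrix B_S(y) = Y^{-1/2} B(y) Y^{1/2} is negative semidefinite: for all w ∈ ℝ^N, (B_S(y) w | w) ≤ 0. -/
/-!
With `s k = √(y k)`, the off-diagonal entries of `B_S(y)` are `f i j * s i * s j` and the diagonal
ones are `-∑ k, f i k * s k ^ 2`. Symmetrising the double sum in the quadratic form over `(i, j)`
turns it into `-½ ∑ i, ∑ j, f i j * (s j * w i - s i * w j) ^ 2`, which is `≤ 0` as `f ≥ 0`.
-/

open Matrix

namespace MaxwellStefan

variable {ι : Type*} [Fintype ι]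

/-- The paper's `B_S(y)` is `symmetrizedMatrix f (√y)` (see `symmetrizedMatrix_sqrt_apply`). -/
def symmetrizedMatrix [DecidableEq ι] (f : ι → ι → ℝ) (s : ι → ℝ) : Matrix ι ι ℝ :=
  Matrix.of (fun i j => f i j * (s i * s j)) - diagonal (fun i => ∑ k, f i k * s k ^ 2)

theorem sum_sum_mul_sq_sub_eq {f : ι → ι → ℝ} (hsym : ∀ i j, f i j = f j i) (s w : ι → ℝ) :
    ∑ i, ∑ j, f i j * (s j * w i - s i * w j) ^ 2 =
      2 * ∑ i, ∑ j, f i j * s j ^ 2 * w i ^ 2 - 2 * ∑ i, ∑ j, f i j * (s i * s j) * (w i * w j) := by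
  have hswap : ∑ i, ∑ j, f i j * s i ^ 2 * w j ^ 2 = ∑ i, ∑ j, f i j * s j ^ 2 * w i ^ 2 := by
    rw [Finset.sum_comm]
    simp only [hsym]
  have hexpand : ∀ i j, f i j * (s j * w i - s i * w j) ^ 2 =
      f i j * s j ^ 2 * w i ^ 2 + f i j * s i ^ 2 * w j ^ 2
        - 2 * (f i j * (s i * s j) * (w i * w j)) := fun i j => by ring
  simp only [hexpand, Finset.sum_sub_distrib, Finset.sum_add_distrib, ← Finset.mul_sum, hswap]
  ring

variable [DecidableEq ι]

theorem symmetrizedMatrix_mulVec_dotProduct {f : ι → ι → ℝ} (hsym : ∀ i j, f i j = f j i)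
    (s w : ι → ℝ) :
    symmetrizedMatrix f s *ᵥ w ⬝ᵥ w =
      -(1 / 2) * ∑ i, ∑ j, f i j * (s j * w i - s i * w j) ^ 2 := by
  rw [sum_sum_mul_sq_sub_eq hsym, symmetrizedMatrix, sub_mulVec, sub_dotProduct]
  simp only [dotProduct, mulVec_diagonal]
  simp only [dotProduct, mulVec, of_apply, Finset.sum_mul]
  have hdiag : ∀ i j, f i j * s j ^ 2 * w i * w i = f i j * s j ^ 2 * w i ^ 2 :=
    fun i j => by ring
  have hoff : ∀ i j, f i j * (s i * s j) * w j * w i = f i j * (s i * s j) * (w i * w j) :=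
    fun i j => by ring
  simp only [hdiag, hoff]
  ring

theorem symmetrizedMatrix_mulVec_dotProduct_nonpos {f : ι → ι → ℝ}
    (hsym : ∀ i j, f i j = f j i) (hf : ∀ i j, 0 ≤ f i j) (s w : ι → ℝ) :
    symmetrizedMatrix f s *ᵥ w ⬝ᵥ w ≤ 0 := by
  rw [symmetrizedMatrix_mulVec_dotProduct hsym]
  have : 0 ≤ ∑ i, ∑ j, f i j * (s j * w i - s i * w j) ^ 2 :=
    Finset.sum_nonneg fun i _ => Finset.sum_nonneg fun j _ => mul_nonneg (hf i j) (sq_nonneg _)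
  linarith

theorem symmetrizedMatrix_sqrt_apply {f : ι → ι → ℝ} (hdiag : ∀ i, f i i = 0) {y : ι → ℝ}
    (hy : ∀ k, 0 ≤ y k) (i j : ι) :
    symmetrizedMatrix f (fun k => √(y k)) i j =
      if i = j then -(∑ k, f i k * y k) else f i j * √(y i * y j) := by
  simp only [symmetrizedMatrix, Matrix.sub_apply, of_apply, diagonal_apply, Real.sq_sqrt (hy _),
    Real.sqrt_mul (hy i)]
  split_ifs with h
  · subst h; simp [hdiag]
  · ring

end MaxwellStefan

open MaxwellStefan in
theorem maxwell_stefan_BS_negative_semidefinite_general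
    (N : ℕ) (f : Fin N → Fin N → ℝ)
    (hsym : ∀ i j, f i j = f j i)
    (hpos : ∀ i j, i ≠ j → 0 < f i j)
    (hdiag : ∀ i, f i i = 0)
    (y : Fin N → ℝ)
    (hy : ∀ k, 0 < y k ∧ y k < 1)
    (BS : Matrix (Fin N) (Fin N) ℝ)
    (hBS : ∀ i j, BS i j =
      if i = j then -(∑ k, f i k * y k) else f i j * Real.sqrt (y i * y j)) :
    ∀ w : Fin N → ℝ, ∑ i, BS.mulVec w i * w i ≤ 0 := by
  intro w
  have hf : ∀ i j, 0 ≤ f i j := fun i j => by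
    rcases eq_or_ne i j with rfl | h
    · exact (hdiag i).ge
    · exact (hpos i j h).le
  have hBS_eq : BS = symmetrizedMatrix f (fun k => √(y k)) := by
    ext i j
    rw [hBS, symmetrizedMatrix_sqrt_apply hdiag fun k => (hy k).1.le]
  subst hBS_eq
  exact symmetrizedMatrix_mulVec_dotProduct_nonpos hsym hf _ w

/-- For y ∈ D̊, the symmetric matrix B_S(y) is negative semidefinite:
(B_S(y) w | w) ≤ 0 for all w. -/
theorem maxwell_stefan_BS_negative_semidefinite
    (N : ℕ) (hN : 2 ≤ N) (f : Fin N → Fin N → ℝ)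
    (hsym : ∀ i j, f i j = f j i)
    (hpos : ∀ i j, i ≠ j → 0 < f i j)
    (hdiag : ∀ i, f i i = 0)
    (y : Fin N → ℝ)
    (hy : ∀ k, 0 < y k ∧ y k < 1) (hsum : ∑ k, y k = 1)
    (BS : Matrix (Fin N) (Fin N) ℝ)
    (hBS : ∀ i j, BS i j =
      if i = j then -(∑ k, f i k * y k) else f i j * Real.sqrt (y i * y j)) :
    ∀ w : Fin N → ℝ, ∑ i, BS.mulVec w i * w i ≤ 0 :=
  maxwell_stefan_BS_negative_semidefinite_general N f hsym hpos hdiag y hy BS hBS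
end

section
/- For y ∈ D̊ and w ∈ ℝ^N, one has (B_S(y) w | w) = 0 if and only if w ∈ span{y^{1/2}}, where y^{1/2} = (y_1^{1/2},...,y_N^{1/2}). -/
/-!
Writing `s = y^{1/2}` and using `f_{ii} = 0` and the symmetry of `f`, the quadratic form is
`(B_S w | w) = -½ ∑_{i,j} f_{ij} (s_j w_i - s_i w_j)²`.
Since `f_{ij} > 0` off the diagonal, it vanishes exactly when `s_j w_i = s_i w_j` for all
`i, j`, i.e. when `w` is proportional to the nowhere vanishing vector `s`.
-/

open Finset Matrix

namespace MaxwellStefan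

variable {ι R : Type*}

theorem forall_mul_eq_mul_iff_exists_eq_smul {K : Type*} [Field K] {s : ι → K}
    (hs : ∀ i, s i ≠ 0) (w : ι → K) :
    (∀ i j, s j * w i = s i * w j) ↔ ∃ c : K, w = c • s := by
  constructor
  · intro h
    cases isEmpty_or_nonempty ι with
    | inl _ => exact ⟨0, Subsingleton.elim _ _⟩
    | inr hne =>
      obtain ⟨i₀⟩ := hne
      refine ⟨w i₀ / s i₀, funext fun i => ?_⟩
      rw [Pi.smul_apply, smul_eq_mul, div_mul_eq_mul_div, eq_div_iff (hs i₀), mul_comm, h i i₀,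
        mul_comm]
  · rintro ⟨c, rfl⟩ i j
    simp only [Pi.smul_apply, smul_eq_mul]
    ring

variable [Fintype ι]

/-- The matrix `B_S(y)` written in terms of `s = y^{1/2}`. -/
def bsMatrix [DecidableEq ι] [Ring R] (f : ι → ι → R) (s : ι → R) : Matrix ι ι R :=
  of fun i j => if i = j then -(∑ k, f i k * s k ^ 2) else f i j * (s i * s j)

theorem bsMatrix_eq_sub_diagonal [DecidableEq ι] [Ring R] {f : ι → ι → R}
    (hdiag : ∀ i, f i i = 0) (s : ι → R) :
    bsMatrix f s = of (fun i j => f i j * (s i * s j)) - diagonal fun i => ∑ k, f i k * s k ^ 2 := by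
  ext i j
  by_cases h : i = j
  · subst h; simp [bsMatrix, hdiag]
  · simp [bsMatrix, h]

theorem two_mul_sum_mulVec_bsMatrix_mul [DecidableEq ι] [CommRing R] {f : ι → ι → R}
    (hsym : ∀ i j, f i j = f j i) (hdiag : ∀ i, f i i = 0) (s w : ι → R) :
    2 * ∑ i, (bsMatrix f s *ᵥ w) i * w i = -∑ i, ∑ j, f i j * (s j * w i - s i * w j) ^ 2 := by
  have hswap : ∑ i, ∑ j, f i j * s i ^ 2 * w j ^ 2 = ∑ i, ∑ j, f i j * s j ^ 2 * w i ^ 2 := by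
    rw [sum_comm]
    exact sum_congr rfl fun i _ => sum_congr rfl fun j _ => by rw [hsym]
  have hexpand : ∑ i, ∑ j, f i j * (s j * w i - s i * w j) ^ 2 =
      ∑ i, ∑ j, f i j * s j ^ 2 * w i ^ 2 - 2 * ∑ i, ∑ j, f i j * (s i * s j) * w j * w i
        + ∑ i, ∑ j, f i j * s i ^ 2 * w j ^ 2 := by
    simp only [mul_sum, ← sum_sub_distrib, ← sum_add_distrib]
    exact sum_congr rfl fun i _ => sum_congr rfl fun j _ => by ring
  have hform : ∑ i, (bsMatrix f s *ᵥ w) i * w i =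
      ∑ i, ∑ j, f i j * (s i * s j) * w j * w i - ∑ i, ∑ j, f i j * s j ^ 2 * w i ^ 2 := by
    rw [bsMatrix_eq_sub_diagonal hdiag, sub_mulVec]
    simp only [Pi.sub_apply, mulVec_diagonal, sub_mul, sum_sub_distrib]
    simp only [mulVec, dotProduct, of_apply, sum_mul]
    congr 1
    exact sum_congr rfl fun i _ => sum_congr rfl fun j _ => by ring
  rw [hform, hexpand, hswap]
  ring

theorem sum_sum_mul_sq_sub_eq_zero_iff {K : Type*} [Field K] [LinearOrder K]
    [IsStrictOrderedRing K] {f : ι → ι → K} (hpos : ∀ i j, i ≠ j → 0 < f i j)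
    (hdiag : ∀ i, f i i = 0) (s w : ι → K) :
    ∑ i, ∑ j, f i j * (s j * w i - s i * w j) ^ 2 = 0 ↔ ∀ i j, s j * w i = s i * w j := by
  have hf : ∀ i j, 0 ≤ f i j := fun i j => by
    rcases eq_or_ne i j with rfl | h
    · exact (hdiag i).ge
    · exact (hpos i j h).le
  have hterm : ∀ i j, 0 ≤ f i j * (s j * w i - s i * w j) ^ 2 :=
    fun i j => mul_nonneg (hf i j) (sq_nonneg _)
  rw [Fintype.sum_eq_zero_iff_of_nonneg fun i => sum_nonneg fun j _ => hterm i j]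
  simp only [funext_iff, Pi.zero_apply, Fintype.sum_eq_zero_iff_of_nonneg (hterm _)]
  refine forall₂_congr fun i j => ?_
  rcases eq_or_ne i j with rfl | hij
  · simp
  · rw [mul_eq_zero, or_iff_right (hpos i j hij).ne', sq_eq_zero_iff, sub_eq_zero]

theorem eq_bsMatrix_sqrt [DecidableEq ι] {f : ι → ι → ℝ} {y : ι → ℝ} (hy : ∀ k, 0 ≤ y k)
    {BS : Matrix ι ι ℝ}
    (hBS : ∀ i j, BS i j = if i = j then -(∑ k, f i k * y k) else f i j * Real.sqrt (y i * y j)) :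
    BS = bsMatrix f fun i => Real.sqrt (y i) := by
  ext i j
  simp only [hBS, bsMatrix, of_apply, Real.sq_sqrt (hy _), Real.sqrt_mul (hy i)]

end MaxwellStefan

open MaxwellStefan in
theorem maxwell_stefan_BS_quadratic_form_zero_general
    (N : ℕ) (f : Fin N → Fin N → ℝ)
    (hsym : ∀ i j, f i j = f j i)
    (hpos : ∀ i j, i ≠ j → 0 < f i j)
    (hdiag : ∀ i, f i i = 0)
    (y : Fin N → ℝ)
    (hy : ∀ k, 0 < y k ∧ y k < 1)
    (BS : Matrix (Fin N) (Fin N) ℝ)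
    (hBS : ∀ i j, BS i j =
      if i = j then -(∑ k, f i k * y k) else f i j * Real.sqrt (y i * y j)) :
    ∀ w : Fin N → ℝ,
      (∑ i, BS.mulVec w i * w i = 0 ↔
        ∃ c : ℝ, w = c • (fun i => Real.sqrt (y i))) := by
  intro w
  have hsqrt : ∀ i, Real.sqrt (y i) ≠ 0 := fun i => (Real.sqrt_pos.mpr (hy i).1).ne'
  rw [eq_bsMatrix_sqrt (fun k => (hy k).1.le) hBS,
    ← forall_mul_eq_mul_iff_exists_eq_smul hsqrt, ← sum_sum_mul_sq_sub_eq_zero_iff hpos hdiag,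
    ← neg_eq_zero (a := ∑ i, ∑ j, _), ← two_mul_sum_mulVec_bsMatrix_mul hsym hdiag, mul_eq_zero]
  simp only [two_ne_zero, false_or]

/-- For y ∈ D̊ and w ∈ ℝ^N, (B_S(y)w | w) = 0 iff w ∈ span{y^{1/2}}. -/
theorem maxwell_stefan_BS_quadratic_form_zero
    (N : ℕ) (hN : 2 ≤ N) (f : Fin N → Fin N → ℝ)
    (hsym : ∀ i j, f i j = f j i)
    (hpos : ∀ i j, i ≠ j → 0 < f i j)
    (hdiag : ∀ i, f i i = 0)
    (y : Fin N → ℝ)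
    (hy : ∀ k, 0 < y k ∧ y k < 1) (hsum : ∑ k, y k = 1)
    (BS : Matrix (Fin N) (Fin N) ℝ)
    (hBS : ∀ i j, BS i j =
      if i = j then -(∑ k, f i k * y k) else f i j * Real.sqrt (y i * y j)) :
    ∀ w : Fin N → ℝ,
      (∑ i, BS.mulVec w i * w i = 0 ↔
        ∃ c : ℝ, w = c • (fun i => Real.sqrt (y i))) :=
  maxwell_stefan_BS_quadratic_form_zero_general N f hsym hpos hdiag y hy BS hBS
end

section
/- For y ∈ D̊, the matrix -A(y)P(y)Y is symmetric, where A(y) = (B(y)|_E)^{-1} extended by A(y)e-direction conventions as the composition with projection, P(y) = I - y e^T, Y = diag(y). Precisely: (A(y)P(y)Y v | w) = (v | A(y)P(y)Y w) for all v, w ∈ ℝ^N. -/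
/-!
Write `Y = diag y`. Off the diagonal `B = Y F` with `F` symmetric, so `C := Y⁻¹ B` is a symmetric
matrix, and the defining equation `B x_v = Y v - (y ⬝ v) y` becomes `C x_v = v - (y ⬝ v) 𝟙`.
Since `x_v, x_w ∈ E` are orthogonal to `𝟙`, we get `(x_v | w) = (x_v | C x_w) = (C x_v | x_w) = (v | x_w)`.
-/

open Matrix

section SymmetricSolution

variable {ι R : Type*} [Fintype ι] [CommRing R]

theorem Matrix.IsSymm.dotProduct_mulVec_comm {C : Matrix ι ι R} (hC : C.IsSymm) (x z : ι → R) :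
    x ⬝ᵥ (C *ᵥ z) = (C *ᵥ x) ⬝ᵥ z := by
  rw [dotProduct_mulVec, ← vecMul_transpose, hC]

theorem dotProduct_sub_const_of_sum_eq_zero {x : ι → R} (hx : ∑ i, x i = 0) (u : ι → R) (a : R) :
    x ⬝ᵥ (fun i => u i - a) = x ⬝ᵥ u := by
  simp only [dotProduct, mul_sub, Finset.sum_sub_distrib, ← Finset.sum_mul, hx, zero_mul, sub_zero]

theorem Matrix.IsSymm.dotProduct_eq_of_mulVec_eq_sub_const {C : Matrix ι ι R} (hC : C.IsSymm)
    {x z v w : ι → R} {a b : R} (hx : ∑ i, x i = 0) (hz : ∑ i, z i = 0)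
    (hxv : ∀ i, (C *ᵥ x) i = v i - a) (hzw : ∀ i, (C *ᵥ z) i = w i - b) :
    x ⬝ᵥ w = v ⬝ᵥ z := by
  have hCz : C *ᵥ z = fun i => w i - b := funext hzw
  have hCx : C *ᵥ x = fun i => v i - a := funext hxv
  calc x ⬝ᵥ w = x ⬝ᵥ (C *ᵥ z) := by rw [hCz, dotProduct_sub_const_of_sum_eq_zero hx]
    _ = (C *ᵥ x) ⬝ᵥ z := hC.dotProduct_mulVec_comm x z
    _ = v ⬝ᵥ z := by
      rw [hCx, dotProduct_comm, dotProduct_sub_const_of_sum_eq_zero hz, dotProduct_comm]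

end SymmetricSolution

section RowScaling

variable {ι K : Type*} [Fintype ι] [DecidableEq ι] [Field K]

theorem isSymm_diagonal_inv_mul {B f : Matrix ι ι K} {y : ι → K} (hy : ∀ i, y i ≠ 0)
    (hf : f.IsSymm) (hB : ∀ i j, i ≠ j → B i j = f i j * y i) :
    (diagonal y⁻¹ * B).IsSymm := by
  refine IsSymm.ext fun i j => ?_
  rcases eq_or_ne i j with rfl | hij
  · rfl
  · simp only [diagonal_mul, Pi.inv_apply, hB i j hij, hB j i hij.symm, hf.apply]
    field_simp [hy i, hy j]

theorem diagonal_inv_mul_mulVec_apply {B : Matrix ι ι K} {y x v : ι → K} {c : K} {i : ι}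
    (hy : y i ≠ 0) (h : (B *ᵥ x) i = y i * v i - c * y i) :
    ((diagonal y⁻¹ * B) *ᵥ x) i = v i - c := by
  rw [← mulVec_mulVec, mulVec_diagonal, h, Pi.inv_apply]
  field_simp

end RowScaling

theorem maxwell_stefan_APY_symmetric_general
    (N : ℕ) (f : Fin N → Fin N → ℝ)
    (hsym : ∀ i j, f i j = f j i)
    (y : Fin N → ℝ)
    (hy : ∀ k, 0 < y k ∧ y k < 1)
    (B : Matrix (Fin N) (Fin N) ℝ)
    (hB : ∀ i j, B i j = if i = j then -(∑ l, f i l * y l) else f i j * y i)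
    (v w xv xw : Fin N → ℝ)
    (hxvE : ∑ i, xv i = 0)
    (hxv : ∀ i, B.mulVec xv i = y i * v i - (∑ k, y k * v k) * y i)
    (hxwE : ∑ i, xw i = 0)
    (hxw : ∀ i, B.mulVec xw i = y i * w i - (∑ k, y k * w k) * y i) :
    ∑ i, xv i * w i = ∑ i, v i * xw i := by
  have hy0 : ∀ i, y i ≠ 0 := fun i => (hy i).1.ne'
  have hC : (diagonal y⁻¹ * B).IsSymm :=
    isSymm_diagonal_inv_mul (f := of f) hy0 (IsSymm.ext fun i j => hsym j i)
      fun i j hij => by rw [hB, if_neg hij, of_apply]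
  exact hC.dotProduct_eq_of_mulVec_eq_sub_const hxvE hxwE
    (fun i => diagonal_inv_mul_mulVec_apply (hy0 i) (hxv i))
    (fun i => diagonal_inv_mul_mulVec_apply (hy0 i) (hxw i))

/-- For y ∈ D̊, the matrix -A(y)P(y)Y is symmetric, i.e.
(A(y)P(y)Y v | w) = (v | A(y)P(y)Y w) for all v, w. Here A(y)P(y)Y v is the
unique x ∈ E with B(y)x = P(y)Y v. -/
theorem maxwell_stefan_APY_symmetric
    (N : ℕ) (hN : 2 ≤ N) (f : Fin N → Fin N → ℝ)
    (hsym : ∀ i j, f i j = f j i)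
    (hpos : ∀ i j, i ≠ j → 0 < f i j)
    (hdiag : ∀ i, f i i = 0)
    (y : Fin N → ℝ)
    (hy : ∀ k, 0 < y k ∧ y k < 1) (hsum : ∑ k, y k = 1)
    (B : Matrix (Fin N) (Fin N) ℝ)
    (hB : ∀ i j, B i j = if i = j then -(∑ l, f i l * y l) else f i j * y i)
    (v w xv xw : Fin N → ℝ)
    (hxvE : ∑ i, xv i = 0)
    (hxv : ∀ i, B.mulVec xv i = y i * v i - (∑ k, y k * v k) * y i)
    (hxwE : ∑ i, xw i = 0)
    (hxw : ∀ i, B.mulVec xw i = y i * w i - (∑ k, y k * w k) * y i) :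
    ∑ i, xv i * w i = ∑ i, v i * xw i :=
  maxwell_stefan_APY_symmetric_general N f hsym y hy B hB v w xv xw hxvE hxv hxwE hxw
end

section
/- For y ∈ D̊, the matrix -A(y)P(y)Y is positive semidefinite on ℝ^N, its kernel contains e, and its restriction to E is positive definite. -/
/-! With `z = x / y` the Maxwell–Stefan matrix acts as `(B x)ᵢ = yᵢ ∑ⱼ fᵢⱼ yⱼ (zⱼ - zᵢ)`, a weighted
graph Laplacian in `z`. If `x ∈ E` solves `B x = P Y v`, then `∑ xᵢ vᵢ = ∑ zᵢ (B x)ᵢ`, and the symmetry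
of `f` turns this into `-½ ∑ᵢⱼ fᵢⱼ yᵢ yⱼ (zᵢ - zⱼ)² ≤ 0`. Equality forces `z` to be constant, i.e.
`x ∈ E` to be a multiple of `y`, hence `x = 0`; then `Y v` is a multiple of `y`, so `v` is constant,
and `v ∈ E` gives `v = 0`. -/

open Finset

variable {ι : Type*} [Fintype ι]

def dirichletForm (w : ι → ι → ℝ) (z : ι → ℝ) : ℝ :=
  ∑ i, ∑ j, w i j * (z i - z j) ^ 2

section DirichletForm

variable {w : ι → ι → ℝ}

theorem sum_mul_sum_mul_sub_eq_neg_half_dirichletForm (hw : ∀ i j, w i j = w j i) (z : ι → ℝ) :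
    ∑ i, z i * ∑ j, w i j * (z j - z i) = -(1 / 2) * dirichletForm w z := by
  have hswap : ∑ i, ∑ j, w i j * (z i * (z j - z i)) = ∑ i, ∑ j, w i j * (z j * (z i - z j)) := by
    rw [sum_comm]
    simp_rw [hw]
  calc ∑ i, z i * ∑ j, w i j * (z j - z i)
      = ∑ i, ∑ j, w i j * (z i * (z j - z i)) :=
        sum_congr rfl fun i _ => by rw [mul_sum]; exact sum_congr rfl fun j _ => by ring
    _ = (1 / 2) * (∑ i, ∑ j, w i j * (z i * (z j - z i))
          + ∑ i, ∑ j, w i j * (z j * (z i - z j))) := by rw [← hswap]; ring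
    _ = -(1 / 2) * dirichletForm w z := by
        rw [← sum_add_distrib, dirichletForm, mul_sum, mul_sum]
        refine sum_congr rfl fun i _ => ?_
        rw [← sum_add_distrib, mul_sum, mul_sum]
        exact sum_congr rfl fun j _ => by ring

omit [Fintype ι] in
theorem mul_sq_sub_nonneg (hw : ∀ i j, i ≠ j → 0 < w i j) (z : ι → ℝ) (i j : ι) :
    0 ≤ w i j * (z i - z j) ^ 2 := by
  rcases eq_or_ne i j with rfl | hij
  · simp
  · exact mul_nonneg (hw i j hij).le (sq_nonneg _)

theorem dirichletForm_nonneg (hw : ∀ i j, i ≠ j → 0 < w i j) (z : ι → ℝ) :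
    0 ≤ dirichletForm w z :=
  sum_nonneg fun i _ => sum_nonneg fun j _ => mul_sq_sub_nonneg hw z i j

theorem eq_of_dirichletForm_eq_zero (hw : ∀ i j, i ≠ j → 0 < w i j) {z : ι → ℝ}
    (hz : dirichletForm w z = 0) (i j : ι) : z i = z j := by
  have hterm : ∀ i j, w i j * (z i - z j) ^ 2 = 0 := by
    intro i
    have hrow := (Fintype.sum_eq_zero_iff_of_nonneg fun i =>
      sum_nonneg fun j _ => mul_sq_sub_nonneg hw z i j).1 hz
    exact congrFun ((Fintype.sum_eq_zero_iff_of_nonneg (mul_sq_sub_nonneg hw z i)).1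
      (congrFun hrow i))
  rcases eq_or_ne i j with rfl | hij
  · rfl
  · have := (mul_eq_zero.1 (hterm i j)).resolve_left (hw i j hij).ne'
    exact sub_eq_zero.1 (pow_eq_zero_iff two_ne_zero |>.1 this)

end DirichletForm

section MaxwellStefan

variable [DecidableEq ι] {f : ι → ι → ℝ} {y : ι → ℝ} {B : Matrix ι ι ℝ}

theorem maxwellStefan_mulVec_apply (hdiag : ∀ i, f i i = 0) (hy : ∀ k, y k ≠ 0)
    (hB : ∀ i j, B i j = if i = j then -(∑ l, f i l * y l) else f i j * y i) (x : ι → ℝ)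
    (i : ι) : B.mulVec x i = y i * ∑ j, f i j * y j * (x j / y j - x i / y i) := by
  have hB' : B = Matrix.of (fun i j => f i j * y i) - Matrix.diagonal fun i => ∑ l, f i l * y l := by
    ext i j
    rw [hB]
    split_ifs with hij
    · simp [hij, hdiag]
    · simp [hij]
  rw [hB', Matrix.sub_mulVec, Pi.sub_apply, Matrix.mulVec_diagonal, mul_sum, sum_mul]
  simp only [Matrix.mulVec, dotProduct, Matrix.of_apply, ← sum_sub_distrib]
  refine sum_congr rfl fun j _ => ?_
  field_simp [hy i, hy j]

theorem maxwellStefan_sum_div_mul_mulVec (hsym : ∀ i j, f i j = f j i) (hdiag : ∀ i, f i i = 0)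
    (hy : ∀ k, y k ≠ 0)
    (hB : ∀ i j, B i j = if i = j then -(∑ l, f i l * y l) else f i j * y i) (x : ι → ℝ) :
    ∑ i, x i / y i * B.mulVec x i
      = -(1 / 2) * dirichletForm (fun i j => f i j * y i * y j) (x / y) := by
  rw [← sum_mul_sum_mul_sub_eq_neg_half_dirichletForm fun i j => by rw [hsym]; ring]
  refine sum_congr rfl fun i _ => ?_
  rw [maxwellStefan_mulVec_apply hdiag hy hB, mul_sum, mul_sum, mul_sum]
  exact sum_congr rfl fun j _ => by simp only [Pi.div_apply]; ring

theorem maxwellStefan_sum_mul_eq_neg_half_dirichletForm (hsym : ∀ i j, f i j = f j i)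
    (hdiag : ∀ i, f i i = 0) (hy : ∀ k, y k ≠ 0)
    (hB : ∀ i j, B i j = if i = j then -(∑ l, f i l * y l) else f i j * y i) {v x : ι → ℝ}
    (hx : ∑ i, x i = 0) (hBx : ∀ i, B.mulVec x i = y i * v i - (∑ k, y k * v k) * y i) :
    ∑ i, x i * v i = -(1 / 2) * dirichletForm (fun i j => f i j * y i * y j) (x / y) := by
  rw [← maxwellStefan_sum_div_mul_mulVec hsym hdiag hy hB]
  calc ∑ i, x i * v i = ∑ i, x i * v i - (∑ k, y k * v k) * ∑ i, x i := by rw [hx]; ring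
    _ = ∑ i, x i / y i * B.mulVec x i := by
        rw [mul_sum, ← sum_sub_distrib]
        refine sum_congr rfl fun i _ => ?_
        rw [hBx]
        field_simp [hy i]

end MaxwellStefan

theorem eq_zero_of_dirichletForm_div_eq_zero {w : ι → ι → ℝ} (hw : ∀ i j, i ≠ j → 0 < w i j)
    {y x : ι → ℝ} (hy : ∀ k, 0 < y k) (hx : ∑ i, x i = 0) (hD : dirichletForm w (x / y) = 0) :
    x = 0 := by
  funext i
  have hx_eq : ∀ j, x j = x i / y i * y j := fun j => by
    rw [← Pi.div_apply, ← eq_of_dirichletForm_eq_zero hw hD j i, Pi.div_apply,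
      div_mul_cancel₀ _ (hy j).ne']
  have hsum : x i / y i * ∑ j, y j = 0 := by
    rw [mul_sum, ← hx]
    exact sum_congr rfl fun j _ => (hx_eq j).symm
  have hsum_y : 0 < ∑ j, y j := sum_pos (fun j _ => hy j) ⟨i, mem_univ i⟩
  rw [hx_eq i, (mul_eq_zero.1 hsum).resolve_right hsum_y.ne', zero_mul, Pi.zero_apply]

theorem eq_zero_of_mul_sub_sum_mul_mul_eq_zero {y v : ι → ℝ} (hy : ∀ k, y k ≠ 0)
    (hv : ∑ i, v i = 0) (h : ∀ i, y i * v i - (∑ k, y k * v k) * y i = 0) : v = 0 := by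
  set c := ∑ k, y k * v k
  have hvc : ∀ i, v i = c := fun i =>
    mul_left_cancel₀ (hy i) (by linear_combination h i)
  funext i
  have hcard : (Fintype.card ι : ℝ) * c = 0 := by simpa [hvc] using hv
  have : Nonempty ι := ⟨i⟩
  rw [hvc, Pi.zero_apply]
  exact (mul_eq_zero.1 hcard).resolve_left (Nat.cast_ne_zero.2 Fintype.card_ne_zero)

theorem maxwell_stefan_APY_definiteness_general
    (N : ℕ) (f : Fin N → Fin N → ℝ)
    (hsym : ∀ i j, f i j = f j i)
    (hpos : ∀ i j, i ≠ j → 0 < f i j)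
    (hdiag : ∀ i, f i i = 0)
    (y : Fin N → ℝ)
    (hy : ∀ k, 0 < y k ∧ y k < 1)
    (B : Matrix (Fin N) (Fin N) ℝ)
    (hB : ∀ i j, B i j = if i = j then -(∑ l, f i l * y l) else f i j * y i) :
    -- positive semidefiniteness of -A(y)P(y)Y on ℝ^N
    (∀ v x : Fin N → ℝ, (∑ i, x i = 0) →
      (∀ i, B.mulVec x i = y i * v i - (∑ k, y k * v k) * y i) →
      0 ≤ -(∑ i, x i * v i)) ∧
    -- e belongs to the kernel: A(y)P(y)Y e = 0
    (∀ x : Fin N → ℝ, (∑ i, x i = 0) →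
      (∀ i, B.mulVec x i = y i * 1 - (∑ k, y k * 1) * y i) → x = 0) ∧
    -- positive definiteness on E
    (∀ v x : Fin N → ℝ, (∑ i, v i = 0) → v ≠ 0 → (∑ i, x i = 0) →
      (∀ i, B.mulVec x i = y i * v i - (∑ k, y k * v k) * y i) →
      0 < -(∑ i, x i * v i)) := by
  have hy₀ : ∀ k, 0 < y k := fun k => (hy k).1
  have hw : ∀ i j, i ≠ j → 0 < f i j * y i * y j := fun i j hij =>
    mul_pos (mul_pos (hpos i j hij) (hy₀ i)) (hy₀ j)
  have key {v x : Fin N → ℝ} := maxwellStefan_sum_mul_eq_neg_half_dirichletForm (v := v) (x := x)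
    hsym hdiag (fun k => (hy₀ k).ne') hB
  refine ⟨fun v x hx hBx => ?_, fun x hx hBx => ?_, fun v x hv hv₀ hx hBx => ?_⟩
  · rw [key hx hBx]
    linarith [dirichletForm_nonneg hw (x / y)]
  · have hD := key (v := fun _ => 1) hx hBx
    simp only [mul_one, hx] at hD
    exact eq_zero_of_dirichletForm_div_eq_zero hw hy₀ hx (by linarith)
  · rw [key hx hBx, neg_mul, neg_neg]
    refine mul_pos one_half_pos ((dirichletForm_nonneg hw _).lt_of_ne' fun hD => hv₀ ?_)
    obtain rfl := eq_zero_of_dirichletForm_div_eq_zero hw hy₀ hx hD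
    refine eq_zero_of_mul_sub_sum_mul_mul_eq_zero (fun k => (hy₀ k).ne') hv fun i => ?_
    rw [← hBx, Matrix.mulVec_zero, Pi.zero_apply]

/-- For y ∈ D̊, the matrix -A(y)P(y)Y is positive semidefinite on
ℝ^N, its kernel contains e, and its restriction to E is positive definite.
Here A(y)P(y)Y v is encoded as the unique x ∈ E with B(y)x = P(y)Y v. -/
theorem maxwell_stefan_APY_definiteness
    (N : ℕ) (hN : 2 ≤ N) (f : Fin N → Fin N → ℝ)
    (hsym : ∀ i j, f i j = f j i)
    (hpos : ∀ i j, i ≠ j → 0 < f i j)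
    (hdiag : ∀ i, f i i = 0)
    (y : Fin N → ℝ)
    (hy : ∀ k, 0 < y k ∧ y k < 1) (hsum : ∑ k, y k = 1)
    (B : Matrix (Fin N) (Fin N) ℝ)
    (hB : ∀ i j, B i j = if i = j then -(∑ l, f i l * y l) else f i j * y i) :
    -- positive semidefiniteness of -A(y)P(y)Y on ℝ^N
    (∀ v x : Fin N → ℝ, (∑ i, x i = 0) →
      (∀ i, B.mulVec x i = y i * v i - (∑ k, y k * v k) * y i) →
      0 ≤ -(∑ i, x i * v i)) ∧
    -- e belongs to the kernel: A(y)P(y)Y e = 0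
    (∀ x : Fin N → ℝ, (∑ i, x i = 0) →
      (∀ i, B.mulVec x i = y i * 1 - (∑ k, y k * 1) * y i) → x = 0) ∧
    -- positive definiteness on E
    (∀ v x : Fin N → ℝ, (∑ i, v i = 0) → v ≠ 0 → (∑ i, x i = 0) →
      (∀ i, B.mulVec x i = y i * v i - (∑ k, y k * v k) * y i) →
      0 < -(∑ i, x i * v i)) :=
  maxwell_stefan_APY_definiteness_general N f hsym hpos hdiag y hy B hB
end

section
/- With the notation of reversible mass-action kinetics and a positive chemical equilibrium c_*: for c > 0, (log(c/c_*) | ∑_l ν_l r_l(c)) = 0 if and only if r_l(c) = 0 for every l = 1,...,m, i.e., c is itself a chemical equilibrium. -/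
/-! With forward and backward fluxes `A_l = k_l^+ c^{ν_l^+}` and `B_l = k_l^- c^{ν_l^-}`, the
equilibrium condition `c_*^{ν_l} = k_l^- / k_l^+` absorbs the rate constants:
`log A_l - log B_l = ⟨log (c / c_*), ν_l⟩`. Hence the entropy production equals
`-∑_l (log A_l - log B_l) (A_l - B_l)`, a sum of nonpositive terms by monotonicity of `log`, which
vanishes only if `A_l = B_l` for every `l`. -/

open Real Finset

section StrictMonoOn

variable {α : Type*} [Ring α] [LinearOrder α] [IsStrictOrderedRing α] {f : α → α} {s : Set α}
  {a b : α}

lemma StrictMonoOn.sub_mul_sub_pos (hf : StrictMonoOn f s) (ha : a ∈ s) (hb : b ∈ s)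
    (hab : a ≠ b) : 0 < (f a - f b) * (a - b) := by
  rcases hab.lt_or_gt with h | h
  · exact mul_pos_of_neg_of_neg (sub_neg.2 (hf ha hb h)) (sub_neg.2 h)
  · exact mul_pos (sub_pos.2 (hf hb ha h)) (sub_pos.2 h)

lemma StrictMonoOn.sub_mul_sub_nonneg (hf : StrictMonoOn f s) (ha : a ∈ s) (hb : b ∈ s) :
    0 ≤ (f a - f b) * (a - b) := by
  rcases eq_or_ne a b with rfl | hab
  · simp
  · exact (hf.sub_mul_sub_pos ha hb hab).le

lemma StrictMonoOn.sub_mul_sub_eq_zero_iff (hf : StrictMonoOn f s) (ha : a ∈ s) (hb : b ∈ s) :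
    (f a - f b) * (a - b) = 0 ↔ a = b := by
  refine ⟨fun h => ?_, fun h => by simp [h]⟩
  by_contra hab
  exact (hf.sub_mul_sub_pos ha hb hab).ne' h

end StrictMonoOn

section MassAction

variable {ι : Type*} [Fintype ι] {x : ι → ℝ}

lemma Real.log_prod_zpow (hx : ∀ j, 0 < x j) (n : ι → ℤ) :
    log (∏ j, x j ^ n j) = ∑ j, n j * log (x j) := by
  rw [log_prod fun j _ => (zpow_pos (hx j) _).ne']
  simp only [log_zpow]

lemma Real.log_prod_pow (hx : ∀ j, 0 < x j) (n : ι → ℕ) :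
    log (∏ j, x j ^ n j) = ∑ j, n j * log (x j) := by
  simpa only [zpow_natCast, Int.cast_natCast] using log_prod_zpow hx (fun j => (n j : ℤ))

lemma Real.log_mul_prod_pow {k : ℝ} (hk : 0 < k) (hx : ∀ j, 0 < x j) (n : ι → ℕ) :
    log (k * ∏ j, x j ^ n j) = log k + ∑ j, n j * log (x j) := by
  rw [log_mul hk.ne' (prod_pos fun j _ => pow_pos (hx j) _).ne', log_prod_pow hx]

lemma log_flux_ratio_eq_sum_log_div_mul {νp νm : ι → ℕ} {kp km : ℝ} (hkp : 0 < kp)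
    (hkm : 0 < km) {c cstar : ι → ℝ} (hc : ∀ j, 0 < c j) (hcstar : ∀ j, 0 < cstar j)
    (heq : ∏ j, cstar j ^ ((νp j : ℤ) - (νm j : ℤ)) = km / kp) :
    log (kp * ∏ j, c j ^ νp j) - log (km * ∏ j, c j ^ νm j) =
      ∑ i, log (c i / cstar i) * ((νp i : ℝ) - (νm i : ℝ)) := by
  have hstar := congrArg log heq
  rw [log_prod_zpow hcstar, log_div hkm.ne' hkp.ne'] at hstar
  push_cast at hstar
  rw [log_mul_prod_pow hkp hc, log_mul_prod_pow hkm hc]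
  simp only [log_div (hc _).ne' (hcstar _).ne', sub_mul, mul_sub, sum_sub_distrib] at hstar ⊢
  simp only [mul_comm (log _)] at hstar ⊢
  linarith

end MassAction

theorem mass_action_entropy_production_zero_iff_general
    (N m : ℕ)
    (νp νm : Fin m → Fin N → ℕ)
    (kp km : Fin m → ℝ) (hkp : ∀ l, 0 < kp l) (hkm : ∀ l, 0 < km l)
    (cstar : Fin N → ℝ) (hcstar : ∀ j, 0 < cstar j)
    (heq : ∀ l, ∏ j, (cstar j) ^ ((νp l j : ℤ) - (νm l j : ℤ)) = km l / kp l)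
    (c : Fin N → ℝ) (hc : ∀ j, 0 < c j) :
    (∑ i, Real.log (c i / cstar i) *
      (∑ l, ((νp l i : ℝ) - (νm l i : ℝ)) *
        (-(kp l) * ∏ j, (c j) ^ (νp l j) + km l * ∏ j, (c j) ^ (νm l j))) = 0)
    ↔ ∀ l, -(kp l) * ∏ j, (c j) ^ (νp l j) + km l * ∏ j, (c j) ^ (νm l j) = 0 := by
  set A : Fin m → ℝ := fun l => kp l * ∏ j, c j ^ νp l j
  set B : Fin m → ℝ := fun l => km l * ∏ j, c j ^ νm l j
  have hA : ∀ l, A l ∈ Set.Ioi 0 := fun l => mul_pos (hkp l) (prod_pos fun j _ => pow_pos (hc j) _)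
  have hB : ∀ l, B l ∈ Set.Ioi 0 := fun l => mul_pos (hkm l) (prod_pos fun j _ => pow_pos (hc j) _)
  have hrate : ∀ l, -(kp l) * ∏ j, c j ^ νp l j + km l * ∏ j, c j ^ νm l j = -(A l - B l) :=
    fun l => by ring
  have hproduction : ∑ i, log (c i / cstar i) *
      (∑ l, ((νp l i : ℝ) - (νm l i : ℝ)) *
        (-(kp l) * ∏ j, c j ^ νp l j + km l * ∏ j, c j ^ νm l j)) =
      -∑ l, (log (A l) - log (B l)) * (A l - B l) := by
    simp only [hrate, mul_sum, ← sum_neg_distrib]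
    rw [sum_comm]
    refine sum_congr rfl fun l _ => ?_
    rw [log_flux_ratio_eq_sum_log_div_mul (hkp l) (hkm l) hc hcstar (heq l), sum_mul,
      ← sum_neg_distrib]
    exact sum_congr rfl fun i _ => by ring
  rw [hproduction, neg_eq_zero,
    sum_eq_zero_iff_of_nonneg fun l _ => strictMonoOn_log.sub_mul_sub_nonneg (hA l) (hB l)]
  simp only [mem_univ, true_implies, hrate, neg_eq_zero, sub_eq_zero,
    strictMonoOn_log.sub_mul_sub_eq_zero_iff (hA _) (hB _)]

/-- The entropy production (log(c/c_*) | ∑_l ν_l r_l(c)) vanishes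
if and only if r_l(c) = 0 for every l, i.e. c is a chemical equilibrium. -/
theorem mass_action_entropy_production_zero_iff
    (N m : ℕ) (hN : 2 ≤ N)
    (νp νm : Fin m → Fin N → ℕ)
    (kp km : Fin m → ℝ) (hkp : ∀ l, 0 < kp l) (hkm : ∀ l, 0 < km l)
    (cstar : Fin N → ℝ) (hcstar : ∀ j, 0 < cstar j)
    (heq : ∀ l, ∏ j, (cstar j) ^ ((νp l j : ℤ) - (νm l j : ℤ)) = km l / kp l)
    (c : Fin N → ℝ) (hc : ∀ j, 0 < c j) :
    (∑ i, Real.log (c i / cstar i) *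
      (∑ l, ((νp l i : ℝ) - (νm l i : ℝ)) *
        (-(kp l) * ∏ j, (c j) ^ (νp l j) + km l * ∏ j, (c j) ^ (νm l j))) = 0)
    ↔ ∀ l, -(kp l) * ∏ j, (c j) ^ (νp l j) + km l * ∏ j, (c j) ^ (νm l j) = 0 :=
  mass_action_entropy_production_zero_iff_general N m νp νm kp km hkp hkm cstar hcstar heq c hc
end
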